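/- For every distributed automaton A over Σ-labeled digraphs, there exists a monovisioned distributed automaton A' such that for every pointed dipath (P, v), A accepts (P, v) if and only if A' accepts (P, v). Consequently, A accepts some pointed dipath if and only if the language of A' (over all pointed digraphs) is nonempty. -/

import Mathlib

/-- A finite nonempty Σ-labeled 1-relational digraph. -/
structure DGraph (A : Type) where
  V : Type
  [finV : Finite V]
  [neV : Nonempty V]
  E : V → V → Prop
  lab : V → A

attribute [instance] DGraph.finV DGraph.neV

/-- A distributed automaton `A = (Q, ι, δ, F)` over Σ-labeled 1-relational
digraphs. -/
structure DA (A : Type) where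
  Q : Type
  [finQ : Finite Q]
  ι : A → Q
  δ : Q → Set Q → Q
  F : Set Q

attribute [instance] DA.finQ

/-- The run: `ρ_0(v) = ι(λ(v))`,
`ρ_{t+1}(v) = δ(ρ_t(v), {ρ_t(u) : (u,v) an edge})`. -/
def DA.run {A : Type} (M : DA A) (G : DGraph A) : ℕ → G.V → M.Q
  | 0, v => M.ι (G.lab v)
  | t+1, v => M.δ (M.run G t v) {q | ∃ u, G.E u v ∧ M.run G t u = q}

/-- Acceptance of a pointed digraph. -/
def DA.Accepts {A : Type} (M : DA A) (G : DGraph A) (v : G.V) : Prop :=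
  ∃ t, M.run G t v ∈ M.F

/-- `p` is a directed path in `G` from `u` to `root` (as a list of successive
nodes following the edges). -/
def IsPathTo {A : Type} (G : DGraph A) (u root : G.V) (p : List G.V) : Prop :=
  p.Chain' G.E ∧ p.head? = some u ∧ p.getLast? = some root

/-- `G` is a directed rooted tree (ditree) with root `root`: from each node
there is exactly one directed path to the root. -/
def IsDitree {A : Type} (G : DGraph A) (root : G.V) : Prop :=
  ∀ u : G.V, ∃! p : List G.V, IsPathTo G u root p

/-- The dipath whose node labels spell the nonempty word `w`. -/
def pathGraph {A : Type} (w : List A) (h : w ≠ []) : DGraph A where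
  V := Fin w.length
  neV := ⟨⟨0, List.length_pos_iff.mpr h⟩⟩
  E := fun u v => u.val + 1 = v.val
  lab := fun i => w.get i

/-- The last node of the dipath spelling `w`. -/
def lastNode {A : Type} (w : List A) (h : w ≠ []) : (pathGraph w h).V :=
  ⟨w.length - 1, by have := List.length_pos_iff.mpr h; omega⟩

/-- A monovisioned distributed automaton: it has a rejecting sink state `⊥ ∉ F`
with `δ(q,N) = ⊥` whenever `|N| > 1` or `⊥ ∈ N` or `q = ⊥`. -/
structure MonoDA (A : Type) extends DA A where
  bot : Q
  bot_not_accept : bot ∉ F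
  sink : ∀ (q : Q) (N : Set Q),
    (¬ N.Subsingleton ∨ bot ∈ N ∨ q = bot) → δ q N = bot

open Classical

/-- The monovisioned version of `M`: states are `Option M.Q` with `none` as
the sink. -/
noncomputable def mono {A : Type} (M : DA A) : MonoDA A where
  Q := Option M.Q
  ι a := some (M.ι a)
  δ q N := match q with
    | none => none
    | some q => if N.Subsingleton ∧ none ∉ N then some (M.δ q {p | some p ∈ N}) else none
  F := some '' M.F
  finQ := by haveI := M.finQ; haveI := Fintype.ofFinite M.Q; infer_instance
  bot := none
  bot_not_accept := by simp
  sink q N h := by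
    cases q with
    | none => rfl
    | some q =>
      show (if N.Subsingleton ∧ none ∉ N then some (M.δ q {p | some p ∈ N}) else none) = none
      rw [if_neg]
      rcases h with h | h | h
      · exact fun hc => h hc.1
      · exact fun hc => hc.2 h
      · exact absurd h (by simp)

lemma mono_delta {A : Type} (M : DA A) (q : M.Q) (N : Set (Option M.Q)) :
    (mono M).δ (some q) N =
      if N.Subsingleton ∧ none ∉ N then some (M.δ q {p | some p ∈ N}) else none := rfl

/-- On a dipath, the monovisioned automaton simulates `M` exactly. -/
lemma mono_run {A : Type} (M : DA A) (w : List A) (h : w ≠ []) :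
    ∀ (t : ℕ) (v : (pathGraph w h).V),
      DA.run (mono M).toDA (pathGraph w h) t v = some (M.run (pathGraph w h) t v) := by
  intro t
  induction t with
  | zero => intro v; rfl
  | succ t ih =>
    intro v
    show (mono M).δ (DA.run (mono M).toDA (pathGraph w h) t v)
        {q | ∃ u, (pathGraph w h).E u v ∧ DA.run (mono M).toDA (pathGraph w h) t u = q}
      = some (M.δ (M.run (pathGraph w h) t v)
        {q | ∃ u, (pathGraph w h).E u v ∧ M.run (pathGraph w h) t u = q})
    rw [ih v]
    have hset : {q | ∃ u, (pathGraph w h).E u v ∧ DA.run (mono M).toDA (pathGraph w h) t u = q}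
        = {q | ∃ u, (pathGraph w h).E u v ∧ some (M.run (pathGraph w h) t u) = q} := by
      ext q; constructor
      · rintro ⟨u, hu, rfl⟩; exact ⟨u, hu, (ih u).symm⟩
      · rintro ⟨u, hu, rfl⟩; exact ⟨u, hu, ih u⟩
    rw [hset, mono_delta, if_pos]
    · congr 2
      ext p
      simp only [Set.mem_setOf_eq, Option.some.injEq]
    · constructor
      · rintro a ⟨u, hu, rfl⟩ b ⟨u', hu', rfl⟩
        have : u = u' := by
          apply Fin.ext
          have h1 : u.val + 1 = v.val := hu
          have h2 : u'.val + 1 = v.val := hu'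
          omega
        rw [this]
      · rintro ⟨u, _, hc⟩; exact Option.some_ne_none _ hc

lemma mono_accepts_iff {A : Type} (M : DA A) (w : List A) (h : w ≠ []) :
    M.Accepts (pathGraph w h) (lastNode w h) ↔
      DA.Accepts (mono M).toDA (pathGraph w h) (lastNode w h) := by
  unfold DA.Accepts
  refine exists_congr fun t => ?_
  rw [mono_run M w h t]
  constructor
  · intro hf; exact ⟨_, hf, rfl⟩
  · rintro ⟨p, hp, hpe⟩
    have : p = M.run (pathGraph w h) t (lastNode w h) := Option.some_injective _ hpe
    rwa [this] at hp

/-- Backward chain from `v` following incoming edges. -/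
noncomputable def chainBack {A : Type} (G : DGraph A) (v : G.V) : ℕ → G.V
  | 0 => v
  | k+1 => if h : ∃ u, G.E u (chainBack G v k) then h.choose else chainBack G v k

lemma chainBack_succ {A : Type} (G : DGraph A) (v : G.V) (k : ℕ) :
    chainBack G v (k+1) =
      if h : ∃ u, G.E u (chainBack G v k) then h.choose else chainBack G v k := rfl

lemma get_map_range {A : Type} (f : ℕ → A) (n i : ℕ)
    (h : i < (List.map f (List.range n)).length) :
    (List.map f (List.range n)).get ⟨i, h⟩ = f i := by
  simp

/-- If the monovisioned automaton accepts some pointed digraph, it accepts a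
pointed dipath. -/
lemma monoBack {A : Type} (M : DA A) (G : DGraph A) (v : G.V)
    (acc : DA.Accepts (mono M).toDA G v) :
    ∃ (w : List A) (hw : w ≠ []),
      DA.Accepts (mono M).toDA (pathGraph w hw) (lastNode w hw) := by
  classical
  obtain ⟨t, ht⟩ := acc
  have hne : DA.run (mono M).toDA G t v ≠ none := by
    rcases ht with ⟨q, _, hq⟩
    rw [← hq]; exact Option.some_ne_none q
  -- Fact: a non-⊥ state at time s+1 forces conditions at time s.
  have nn : ∀ (s : ℕ) (x : G.V), DA.run (mono M).toDA G (s+1) x ≠ none →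
      DA.run (mono M).toDA G s x ≠ none ∧
      (∀ u u', G.E u x → G.E u' x →
        DA.run (mono M).toDA G s u = DA.run (mono M).toDA G s u') ∧
      (∀ u, G.E u x → DA.run (mono M).toDA G s u ≠ none) := by
    intro s x hx
    have hrun : DA.run (mono M).toDA G (s+1) x =
        (mono M).δ (DA.run (mono M).toDA G s x)
          {q | ∃ u, G.E u x ∧ DA.run (mono M).toDA G s u = q} := rfl
    set N := {q | ∃ u, G.E u x ∧ DA.run (mono M).toDA G s u = q} with hN
    cases hq : DA.run (mono M).toDA G s x with
    | none => exact absurd (by rw [hrun, hq]; rfl) hx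
    | some q =>
      by_cases hc : N.Subsingleton ∧ none ∉ N
      · refine ⟨Option.some_ne_none q, ?_, ?_⟩
        · intro u u' hu hu'
          exact hc.1 ⟨u, hu, rfl⟩ ⟨u', hu', rfl⟩
        · intro u hu hun
          exact hc.2 ⟨u, hu, hun⟩
      · exact absurd (by rw [hrun, hq]; exact (mono_delta M q N).trans (if_neg hc)) hx
  -- Fact: non-⊥ propagates downwards in time.
  have descend : ∀ (d s : ℕ) (x : G.V), DA.run (mono M).toDA G (s + d) x ≠ none →
      DA.run (mono M).toDA G s x ≠ none := by
    intro d
    induction d with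
    | zero => intro s x h; exact h
    | succ d ih =>
      intro s x h
      exact ih s x ((nn (s + d) x (by rwa [show s + (d+1) = (s+d)+1 by omega] at h)).1)
  set g := chainBack G v with hg
  have H : ∀ (k s : ℕ), s + k ≤ t → DA.run (mono M).toDA G s (g k) ≠ none := by
    intro k
    induction k with
    | zero =>
      intro s hs
      apply descend (t - s)
      rwa [show s + (t - s) = t by omega]
    | succ k ih =>
      intro s hs
      by_cases hex : ∃ u, G.E u (g k)
      · have h1 := (nn s (g k) (ih (s+1) (by omega))).2.2 hex.choose hex.choose_spec
        rwa [hg, chainBack_succ, dif_pos hex]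
      · rw [hg, chainBack_succ, dif_neg hex]
        exact ih s (by omega)
  have H2 : ∀ (k s : ℕ), s + k < t → ∀ u u', G.E u (g k) → G.E u' (g k) →
      DA.run (mono M).toDA G s u = DA.run (mono M).toDA G s u' := by
    intro k s hs u u' hu hu'
    exact (nn s (g k) (H k (s+1) (by omega))).2.1 u u' hu hu'
  -- the length of the backward chain
  have hPex : ∃ k : ℕ, k = t ∨ ¬∃ u, G.E u (g k) := ⟨t, Or.inl rfl⟩
  set L := Nat.find hPex with hLdef
  have hLspec : L = t ∨ ¬∃ u, G.E u (g L) := Nat.find_spec hPex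
  have hLmin : ∀ k < L, k ≠ t ∧ ∃ u, G.E u (g k) := by
    intro k hk
    have := Nat.find_min hPex hk
    push_neg at this
    exact this
  have hLle : L ≤ t := Nat.find_le (Or.inl rfl)
  set w := (List.range (L+1)).map (fun i => G.lab (g (L - i))) with hwdef
  have hw : w ≠ [] := by simp [hwdef]
  have hwlen : w.length = L + 1 := by simp [hwdef]
  have hnode : ∀ k : ℕ, L - k < w.length := by intro k; rw [hwlen]; omega
  have hlab : ∀ k ≤ L, (pathGraph w hw).lab ⟨L - k, hnode k⟩ = G.lab (g k) := by
    intro k hk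
    have h1 : L - k < (List.range (L+1)).length := by simp
    have := get_map_range (fun i => G.lab (g (L - i))) (L+1) (L-k) (by simp)
    show w.get ⟨L - k, hnode k⟩ = G.lab (g k)
    rw [show (L : ℕ) - (L - k) = k by omega] at this
    exact this
  have hedge : ∀ k, (∃ u, G.E u (g k)) → G.E (g (k+1)) (g k) := by
    intro k hex
    rw [hg, chainBack_succ, dif_pos hex]
    exact hex.choose_spec
  have SIM : ∀ (s k : ℕ), k ≤ L → s + k ≤ t →
      DA.run (mono M).toDA (pathGraph w hw) s ⟨L - k, hnode k⟩ =
        DA.run (mono M).toDA G s (g k) := by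
    intro s
    induction s with
    | zero =>
      intro k hk _
      show (mono M).ι ((pathGraph w hw).lab ⟨L - k, hnode k⟩) = (mono M).ι (G.lab (g k))
      rw [hlab k hk]
    | succ s ih =>
      intro k hk hs
      show (mono M).δ (DA.run (mono M).toDA (pathGraph w hw) s ⟨L - k, hnode k⟩)
          {q | ∃ u, (pathGraph w hw).E u ⟨L - k, hnode k⟩ ∧
            DA.run (mono M).toDA (pathGraph w hw) s u = q} =
        (mono M).δ (DA.run (mono M).toDA G s (g k))
          {q | ∃ u, G.E u (g k) ∧ DA.run (mono M).toDA G s u = q}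
      rw [ih k hk (by omega)]
      congr 1
      by_cases hkL : k < L
      · have hex : ∃ u, G.E u (g k) := (hLmin k hkL).2
        ext q
        simp only [Set.mem_setOf_eq]
        constructor
        · rintro ⟨u, hu, rfl⟩
          have hu2 : u.val + 1 = L - k := hu
          have hu3 : u = (⟨L - (k+1), hnode (k+1)⟩ : Fin w.length) := by
            apply Fin.ext
            show u.val = L - (k + 1)
            omega
          rw [hu3, ih (k+1) (by omega) (by omega)]
          exact ⟨g (k+1), hedge k hex, rfl⟩
        · rintro ⟨u, hu, rfl⟩
          refine ⟨⟨L - (k+1), hnode (k+1)⟩, ?_, ?_⟩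
          · show (L - (k+1)) + 1 = L - k
            omega
          · rw [ih (k+1) (by omega) (by omega)]
            exact H2 k s (by omega) (g (k+1)) u (hedge k hex) hu
      · have hkL' : k = L := le_antisymm hk (not_lt.mp hkL)
        rcases hLspec with hLt | hno
        · omega
        · ext q
          simp only [Set.mem_setOf_eq]
          constructor
          · rintro ⟨u, hu, rfl⟩
            have hu2 : u.val + 1 = L - k := hu
            omega
          · rintro ⟨u, hu, rfl⟩
            rw [hkL'] at hu
            exact absurd ⟨u, hu⟩ hno
  have hlast : lastNode w hw = (⟨L - 0, hnode 0⟩ : Fin w.length) := by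
    apply Fin.ext
    show w.length - 1 = L - 0
    rw [hwlen]
    omega
  refine ⟨w, hw, t, ?_⟩
  rw [hlast, SIM t 0 (by omega) (by omega)]
  exact ht

/-- every distributed automaton can be turned into a monovisioned
one with the same acceptance behavior on pointed dipaths; consequently, the
original automaton accepts some pointed dipath iff the language of the
monovisioned automaton (over all pointed digraphs) is nonempty. -/
theorem monovisioned_transformation (A : Type) (M : DA A) :
    ∃ M' : MonoDA A,
      (∀ (w : List A) (h : w ≠ []),
        M.Accepts (pathGraph w h) (lastNode w h) ↔
          M'.Accepts (pathGraph w h) (lastNode w h)) ∧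
      ((∃ (w : List A) (h : w ≠ []),
          M.Accepts (pathGraph w h) (lastNode w h)) ↔
        ∃ (G : DGraph A) (v : G.V), M'.Accepts G v) := by
  refine ⟨mono M, fun w h => mono_accepts_iff M w h, ?_, ?_⟩
  · rintro ⟨w, h, hacc⟩
    exact ⟨pathGraph w h, lastNode w h, (mono_accepts_iff M w h).mp hacc⟩
  · rintro ⟨G, v, hacc⟩
    obtain ⟨w, hw, hacc'⟩ := monoBack M G v hacc
    exact ⟨w, hw, (mono_accepts_iff M w hw).mpr hacc'⟩
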